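/- Let b > 0, θ ∈ ℝ^K, k* = argmax_k |θ_k| with θ_{k*} ≠ 0, and assume ‖θ̂_t − θ‖_∞ ≤ b/√t for all t. If the stopping time T satisfies both criteria (i) max_k |θ̂_{k,T}| − 2b/√T > 0 and (ii) T ≥ √n/(max_k |θ̂_{k,T}| − b/√T), then T ≥ max(b²/θ_{k*}², √n/|θ_{k*}|), and in particular T ≥ b²√n/‖θ‖₂ when additionally max(b²/θ_{k*}², √n/|θ_{k*}|) ≥ b²√n/‖θ‖₂ holds via |θ_{k*}| ≤ ‖θ‖₂. -/

import Mathlib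

/-! With `ε = b/√T`, concentration gives `max_k |θ̂_{k,T}| ≤ |θ_{k*}| + ε`. Criterion (i) then
forces `ε < |θ_{k*}|`, i.e. `T > b²/θ_{k*}²`, and in criterion (ii) the denominator is positive
and at most `|θ_{k*}|`, so `T ≥ √n/|θ_{k*}|`. -/

open Finset

theorem Finset.sup'_abs_le_of_abs_sub_le {ι : Type*} {s : Finset ι} (hs : s.Nonempty)
    {f g : ι → ℝ} {c ε : ℝ} (hfg : ∀ k, |f k - g k| ≤ ε) (hg : ∀ k, |g k| ≤ c) :
    s.sup' hs (fun k => |f k|) ≤ c + ε :=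
  sup'_le hs _ fun k _ => by
    linarith [abs_sub_abs_le_abs_sub (f k) (g k), hfg k, hg k]

theorem sq_div_sq_lt_of_div_sqrt_lt {a b T : ℝ} (hb : 0 ≤ b) (hT : 0 < T)
    (h : b / √T < a) : b ^ 2 / a ^ 2 < T := by
  have hsT : 0 < √T := Real.sqrt_pos.mpr hT
  have ha : 0 < a := (div_nonneg hb hsT.le).trans_lt h
  have hlt : b < a * √T := (div_lt_iff₀ hsT).mp h
  rw [div_lt_iff₀ (by positivity)]
  calc b ^ 2 < (a * √T) ^ 2 := pow_lt_pow_left₀ hlt hb two_ne_zero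
    _ = T * a ^ 2 := by rw [mul_pow, Real.sq_sqrt hT.le, mul_comm]

theorem stmt12_general {K n : ℕ} (hKne : (Finset.univ : Finset (Fin K)).Nonempty)
    (θ : EuclideanSpace ℝ (Fin K)) (θhat : ℕ → Fin K → ℝ) {b : ℝ} (hb : 0 < b)
    (kstar : Fin K) (hkstar : ∀ k, |θ k| ≤ |θ kstar|)
    (T : ℕ) (hT1 : 1 ≤ T)
    (hconc : ∀ t : ℕ, 1 ≤ t → ∀ k, |θhat t k - θ k| ≤ b / Real.sqrt t)
    (hcrit1 : 0 < Finset.univ.sup' hKne (fun k => |θhat T k|) - 2 * b / Real.sqrt T)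
    (hcrit2 : Real.sqrt n / (Finset.univ.sup' hKne (fun k => |θhat T k|) - b / Real.sqrt T)
      ≤ (T : ℝ)) :
    max (b ^ 2 / θ kstar ^ 2) (Real.sqrt n / |θ kstar|) ≤ (T : ℝ) ∧
    (b ^ 2 * Real.sqrt n / ‖θ‖ ≤ max (b ^ 2 / θ kstar ^ 2) (Real.sqrt n / |θ kstar|) →
      b ^ 2 * Real.sqrt n / ‖θ‖ ≤ (T : ℝ)) := by
  set M := univ.sup' hKne fun k => |θhat T k|
  set ε := b / √(T : ℝ)
  have hT : (0 : ℝ) < T := by exact_mod_cast hT1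
  have hεpos : 0 < ε := div_pos hb (Real.sqrt_pos.mpr hT)
  have hM : M ≤ |θ kstar| + ε := sup'_abs_le_of_abs_sub_le hKne (hconc T hT1) hkstar
  have hMε : ε < M - ε := by rw [mul_div_assoc] at hcrit1; linarith
  have hcrit1_bound : b ^ 2 / θ kstar ^ 2 ≤ T := by
    rw [← sq_abs (θ kstar)]
    exact (sq_div_sq_lt_of_div_sqrt_lt hb.le hT (by linarith)).le
  have hcrit2_bound : √(n : ℝ) / |θ kstar| ≤ T :=
    (div_le_div_of_nonneg_left (Real.sqrt_nonneg _) (hεpos.trans hMε) (by linarith)).trans hcrit2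
  have hbound := max_le hcrit1_bound hcrit2_bound
  exact ⟨hbound, fun h => h.trans hbound⟩

/-- If the stopping time `T` satisfies both criteria
(i) `max_k |θ̂_{k,T}| − 2b/√T > 0` and (ii) `T ≥ √n/(max_k |θ̂_{k,T}| − b/√T)`,
under the concentration `‖θ̂_t − θ‖_∞ ≤ b/√t`, then
`T ≥ max(b²/θ_{k*}², √n/|θ_{k*}|)`; and in particular `T ≥ b²√n/‖θ‖₂` whenever
additionally `max(b²/θ_{k*}², √n/|θ_{k*}|) ≥ b²√n/‖θ‖₂`. -/
theorem stmt12 {K n : ℕ} (hKne : (Finset.univ : Finset (Fin K)).Nonempty)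
    (θ : EuclideanSpace ℝ (Fin K)) (θhat : ℕ → Fin K → ℝ) {b : ℝ} (hb : 0 < b)
    (kstar : Fin K) (hkstar : ∀ k, |θ k| ≤ |θ kstar|) (hθ : θ kstar ≠ 0)
    (T : ℕ) (hT1 : 1 ≤ T)
    (hconc : ∀ t : ℕ, 1 ≤ t → ∀ k, |θhat t k - θ k| ≤ b / Real.sqrt t)
    (hcrit1 : 0 < Finset.univ.sup' hKne (fun k => |θhat T k|) - 2 * b / Real.sqrt T)
    (hcrit2 : Real.sqrt n / (Finset.univ.sup' hKne (fun k => |θhat T k|) - b / Real.sqrt T)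
      ≤ (T : ℝ)) :
    max (b ^ 2 / θ kstar ^ 2) (Real.sqrt n / |θ kstar|) ≤ (T : ℝ) ∧
    (b ^ 2 * Real.sqrt n / ‖θ‖ ≤ max (b ^ 2 / θ kstar ^ 2) (Real.sqrt n / |θ kstar|) →
      b ^ 2 * Real.sqrt n / ‖θ‖ ≤ (T : ℝ)) :=
  stmt12_general hKne θ θhat hb kstar hkstar T hT1 hconc hcrit1 hcrit2
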